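/- Let B be a finite set of permutations. Av(B) contains only finitely many of the vertical wedge alternations τ_m (m ≥ 1) if and only if B contains a permutation that avoids both of the permutations 132 and 312. -/

import Mathlib

/-- A list of naturals is a permutation (in one-line notation) of `1,…,n`
where `n` is its length. -/
def IsPermList (l : List ℕ) : Prop :=
  l.Perm ((List.range l.length).map (· + 1))

/-- `f` is an occurrence of the pattern `β` in `π`: a strictly increasing
choice of indices of `π` whose entries are order isomorphic to `β`. -/
def IsOccurrence (π β : List ℕ) (f : Fin β.length → Fin π.length) : Prop :=
  StrictMono f ∧ ∀ s t : Fin β.length, π.get (f s) < π.get (f t) ↔ β.get s < β.get t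

/-- `π` contains the pattern `β`. -/
def PContains (π β : List ℕ) : Prop :=
  ∃ f : Fin β.length → Fin π.length, IsOccurrence π β f

/-- `π` avoids the pattern `β`. -/
def PAvoids (π β : List ℕ) : Prop :=
  ¬ PContains π β

/-- The class of permutations avoiding every member of `B`. -/
def Av (B : Set (List ℕ)) : Set (List ℕ) :=
  {π | IsPermList π ∧ ∀ β ∈ B, PAvoids π β}

/-- Insert a new maximum entry at (0-indexed) position `i` of `l`. -/
def insertMax (l : List ℕ) (i : ℕ) : List ℕ :=
  l.insertIdx i (l.length + 1)

/-- Position `i` is an active site of `l` relative to `B`. -/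
def ActiveSite (B : Set (List ℕ)) (l : List ℕ) (i : ℕ) : Prop :=
  i ≤ l.length ∧ insertMax l i ∈ Av B

/-- The increasing permutation `1,2,…,n`. -/
def incrPerm (n : ℕ) : List ℕ :=
  (List.range n).map (· + 1)

/-- A permutation (as a list) is a vertical alternation: every entry in an even
(1-indexed) position lies above every entry in an odd position, or vice versa.
(Index `s : Fin l.length` corresponds to 1-indexed position `s + 1`.) -/
def VerticalAlternation (l : List ℕ) : Prop :=
  (∀ s t : Fin l.length, s.val % 2 = 1 → t.val % 2 = 0 → l.get t < l.get s) ∨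
  (∀ s t : Fin l.length, s.val % 2 = 1 → t.val % 2 = 0 → l.get s < l.get t)

/-- The subsequence of entries in positions congruent to `r` (0-indexed, mod 2)
is increasing. -/
def IncOnRes (l : List ℕ) (r : ℕ) : Prop :=
  ∀ s t : Fin l.length, s < t → s.val % 2 = r → t.val % 2 = r → l.get s < l.get t

/-- The subsequence of entries in positions congruent to `r` (0-indexed, mod 2)
is decreasing. -/
def DecOnRes (l : List ℕ) (r : ℕ) : Prop :=
  ∀ s t : Fin l.length, s < t → s.val % 2 = r → t.val % 2 = r → l.get t < l.get s

/-- A vertical parallel alternation: a vertical alternation of even length whose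
odd-position and even-position subsequences are both increasing or both decreasing. -/
def IsVertParallel (l : List ℕ) : Prop :=
  VerticalAlternation l ∧ Even l.length ∧
    ((IncOnRes l 0 ∧ IncOnRes l 1) ∨ (DecOnRes l 0 ∧ DecOnRes l 1))

/-- A vertical wedge alternation: a vertical alternation of even length for which one of
the odd-position and even-position subsequences is increasing and the other decreasing. -/
def IsVertWedge (l : List ℕ) : Prop :=
  VerticalAlternation l ∧ Even l.length ∧
    ((IncOnRes l 0 ∧ DecOnRes l 1) ∨ (DecOnRes l 0 ∧ IncOnRes l 1))

/-- The vertical parallel alternation `σ_m`, with `σ_m(2i−1) = m+1−i` and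
`σ_m(2i) = 2m+1−i` (1-indexed). -/
def sigmaAlt (m : ℕ) : List ℕ :=
  (List.range (2 * m)).map (fun j => if j % 2 = 0 then m - j / 2 else 2 * m - j / 2)

/-- The vertical wedge alternation `τ_m`, with `τ_m(2i−1) = m+i` and
`τ_m(2i) = m+1−i` (1-indexed). -/
def tauAlt (m : ℕ) : List ℕ :=
  (List.range (2 * m)).map (fun j => if j % 2 = 0 then m + j / 2 + 1 else m - j / 2)

/-- Standardization: replace each entry of `l` by its rank among the entries of `l`. -/
def stList (l : List ℕ) : List ℕ :=
  l.map (fun x => (l.filter (fun y => y ≤ x)).length)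

/-!
Call a sequence prefix-extremal if each entry is a strict left-to-right maximum or minimum.
The property passes to patterns and fails for `132` and `312`; for permutations it is
equivalent to avoiding both. Every `τ_m` is prefix-extremal (its even positions carry the
increasing maxima `m+1, m+2, …`, its odd positions the decreasing minima `m, m-1, …`), so `τ_m`
avoids every pattern containing `132` or `312`. Conversely a prefix-extremal `β` of length at
most `m` embeds into `τ_m`, its maxima going to even and its minima to odd positions, so only
the `τ_m` with `m < |β|` can avoid it.
-/

theorem IsPermList.nodup {l : List ℕ} (h : IsPermList l) : l.Nodup :=
  h.nodup_iff.mpr (List.nodup_range.map fun _ _ => Nat.add_right_cancel)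

def PrefixExtremal (l : List ℕ) : Prop :=
  ∀ k : Fin l.length, (∀ j < k, l.get j < l.get k) ∨ (∀ j < k, l.get k < l.get j)

instance (l : List ℕ) : Decidable (PrefixExtremal l) := by
  unfold PrefixExtremal; infer_instance

theorem PrefixExtremal.of_contains {π β : List ℕ} (hπ : PrefixExtremal π)
    (h : PContains π β) : PrefixExtremal β := by
  obtain ⟨f, hf, hiso⟩ := h
  intro k
  refine (hπ (f k)).imp (fun hk j hj => ?_) (fun hk j hj => ?_)
  · exact (hiso j k).mp (hk (f j) (hf hj))
  · exact (hiso k j).mp (hk (f j) (hf hj))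

theorem PrefixExtremal.avoids_132 {β : List ℕ} (hβ : PrefixExtremal β) :
    PAvoids β [1,3,2] :=
  fun h => absurd (hβ.of_contains h) (by decide)

theorem PrefixExtremal.avoids_312 {β : List ℕ} (hβ : PrefixExtremal β) :
    PAvoids β [3,1,2] :=
  fun h => absurd (hβ.of_contains h) (by decide)

/-- An entry that is neither a left-to-right maximum nor minimum has an earlier larger entry `i`
and an earlier smaller entry `j`; in the order of `i` and `j` they form `312` or `132`. -/
theorem prefixExtremal_of_avoids {β : List ℕ} (hβ : β.Nodup)
    (h132 : PAvoids β [1,3,2]) (h312 : PAvoids β [3,1,2]) : PrefixExtremal β := by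
  intro k
  by_contra! h
  obtain ⟨⟨i, hik, hi⟩, ⟨j, hjk, hj⟩⟩ := h
  have hki : β.get k < β.get i := hi.lt_of_ne fun e => hik.ne' (hβ.get_inj_iff.mp e)
  have hjk' : β.get j < β.get k := hj.lt_of_ne fun e => hjk.ne (hβ.get_inj_iff.mp e)
  rcases lt_or_gt_of_ne (show i ≠ j by rintro rfl; omega) with hij | hji
  · refine h312 ⟨![i, j, k], ?_, ?_⟩
    · intro s t hst
      fin_cases s <;> fin_cases t <;> simp_all
    · intro s t
      fin_cases s <;> fin_cases t <;> simp_all <;> omega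
  · refine h132 ⟨![j, i, k], ?_, ?_⟩
    · intro s t hst
      fin_cases s <;> fin_cases t <;> simp_all
    · intro s t
      fin_cases s <;> fin_cases t <;> simp_all <;> omega

@[simp]
theorem tauAlt_length (m : ℕ) : (tauAlt m).length = 2 * m := by simp [tauAlt]

theorem tauAlt_get (m : ℕ) (i : Fin (tauAlt m).length) :
    (tauAlt m).get i = if i.val % 2 = 0 then m + i.val / 2 + 1 else m - i.val / 2 := by
  rcases i with ⟨j, hj⟩
  simp [tauAlt]

theorem tauAlt_injective : Function.Injective tauAlt := fun a b h => by
  simpa using congrArg List.length h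

theorem tauAlt_isPermList (m : ℕ) : IsPermList (tauAlt m) := by
  have hnodup : (tauAlt m).Nodup := by
    refine List.nodup_iff_injective_get.mpr fun a b h => Fin.ext ?_
    have ha := a.isLt; have hb := b.isLt
    simp only [tauAlt_get, tauAlt_length] at h ha hb
    split_ifs at h <;> omega
  unfold IsPermList
  rw [tauAlt_length]
  refine (List.subperm_of_subset hnodup fun x hx => ?_).perm_of_length_le (by simp)
  simp only [tauAlt, List.mem_map, List.mem_range] at hx ⊢
  obtain ⟨j, hj, rfl⟩ := hx
  split_ifs
  · exact ⟨m + j / 2, by omega, by omega⟩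
  · exact ⟨m - j / 2 - 1, by omega, by omega⟩

theorem tauAlt_prefixExtremal (m : ℕ) : PrefixExtremal (tauAlt m) := by
  intro k
  have hk : k.val < 2 * m := by simpa using k.isLt
  rcases Nat.mod_two_eq_zero_or_one k.val with hpar | hpar
  · refine Or.inl fun j hj => ?_
    have hj' : j.val < k.val := hj
    simp only [tauAlt_get]
    split_ifs <;> omega
  · refine Or.inr fun j hj => ?_
    have hj' : j.val < k.val := hj
    simp only [tauAlt_get]
    split_ifs <;> omega

theorem PrefixExtremal.tauAlt_contains {β : List ℕ} (hβ : PrefixExtremal β) {m : ℕ}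
    (hm : β.length ≤ m) : PContains (tauAlt m) β := by
  classical
  let IsMax : Fin β.length → Prop := fun k => ∀ j < k, β.get j < β.get k
  let f : Fin β.length → Fin (tauAlt m).length := fun k =>
    ⟨if IsMax k then 2 * k.val else 2 * k.val + 1, by simp only [tauAlt_length]; split_ifs <;> omega⟩
  have hf : ∀ k, (tauAlt m).get (f k) = if IsMax k then m + k.val + 1 else m - k.val := by
    intro k
    simp only [f, tauAlt_get]
    split_ifs <;> omega
  have hlt : ∀ s t, s < t →
      ((tauAlt m).get (f s) < (tauAlt m).get (f t) ↔ β.get s < β.get t) ∧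
      ((tauAlt m).get (f t) < (tauAlt m).get (f s) ↔ β.get t < β.get s) := by
    intro s t hst
    have hst' : s.val < t.val := hst
    rw [hf, hf]
    by_cases ht : IsMax t
    · have := ht s hst
      simp only [ht, if_true]
      split_ifs <;> omega
    · have := (hβ t).resolve_left ht s hst
      simp only [ht, if_false]
      split_ifs <;> omega
  refine ⟨f, fun s t hst => ?_, fun s t => ?_⟩
  · have hst' : s.val < t.val := hst
    show (f s).val < (f t).val
    simp only [f]
    split_ifs <;> omega
  · rcases lt_trichotomy s t with hst | rfl | hts
    · exact (hlt s t hst).1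
    · simp
    · exact (hlt t s hts).2

theorem stmt4_general (B : Set (List ℕ)) (hB : ∀ β ∈ B, IsPermList β) :
    {π | (∃ m : ℕ, 1 ≤ m ∧ π = tauAlt m) ∧ π ∈ Av B}.Finite ↔
      ∃ β ∈ B, PAvoids β [1,3,2] ∧ PAvoids β [3,1,2] := by
  constructor
  · intro hfin
    by_contra! hB132
    refine ((Set.Ici_infinite 1).image tauAlt_injective.injOn) (hfin.subset ?_)
    rintro _ ⟨m, hm, rfl⟩
    refine ⟨⟨m, hm, rfl⟩, tauAlt_isPermList m, fun β hβB hcont => ?_⟩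
    have hβ := (tauAlt_prefixExtremal m).of_contains hcont
    exact hB132 β hβB hβ.avoids_132 hβ.avoids_312
  · rintro ⟨β, hβB, h132, h312⟩
    have hβ := prefixExtremal_of_avoids (hB β hβB).nodup h132 h312
    refine ((Set.finite_Iio β.length).image tauAlt).subset ?_
    rintro _ ⟨⟨m, -, rfl⟩, -, hAv⟩
    exact ⟨m, not_le.mp fun hm => hAv β hβB (hβ.tauAlt_contains hm), rfl⟩

/-- `Av(B)` contains only finitely many of the vertical wedge
alternations `τ_m` iff `B` contains a permutation avoiding `132` and `312`. -/
theorem stmt4 (B : Set (List ℕ)) (hBfin : B.Finite) (hB : ∀ β ∈ B, IsPermList β) :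
    {π | (∃ m : ℕ, 1 ≤ m ∧ π = tauAlt m) ∧ π ∈ Av B}.Finite ↔
      ∃ β ∈ B, PAvoids β [1,3,2] ∧ PAvoids β [3,1,2] :=
  stmt4_general B hB
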